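/- arXiv:2305.08268 — 3 statements merged into one kernel-verified Lean document; each statement's English description precedes it below -/
import Mathlib

section
/- (Montrucchio's Bubble Characterization) Let $q_t > 0$, $P_t > 0$, $D_t \geq 0$ satisfy $q_0 = 1$ and the no-arbitrage condition $q_t P_t = q_{t+1}(P_{t+1}+D_{t+1})$ for all $t$. Then $\lim_{T\to\infty} q_T P_T > 0$ (i.e., the asset exhibits a bubble) if and only if $\sum_{t=1}^\infty D_t/P_t < \infty$. -/
open Filter

theorem stmt_2 (q P D : ℕ → ℝ)
    (hq : ∀ t, 0 < q t) (hP : ∀ t, 0 < P t) (hD : ∀ t, 0 ≤ D t)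
    (hq0 : q 0 = 1)
    (noarb : ∀ t, q t * P t = q (t + 1) * (P (t + 1) + D (t + 1))) :
    (∃ L : ℝ, Tendsto (fun T => q T * P T) atTop (nhds L) ∧ 0 < L) ↔
      Summable (fun t : ℕ => D (t + 1) / P (t + 1)) := by
  set d : ℕ → ℝ := fun t => D (t + 1) / P (t + 1) with hddef
  have hd0 : ∀ t, 0 ≤ d t := fun t => div_nonneg (hD _) (hP _).le
  have ha : ∀ t, 0 < q t * P t := fun t => mul_pos (hq t) (hP t)
  have hstep : ∀ t, q t * P t = (q (t + 1) * P (t + 1)) * (1 + d t) := by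
    intro t
    have hPne : P (t + 1) ≠ 0 := (hP _).ne'
    rw [noarb t, hddef]
    field_simp
  have hprodpos : ∀ T, 0 < ∏ t ∈ Finset.range T, (1 + d t) := by
    intro T
    exact Finset.prod_pos fun t _ => by linarith [hd0 t]
  have hkey : ∀ T, q 0 * P 0 = (q T * P T) * ∏ t ∈ Finset.range T, (1 + d t) := by
    intro T
    induction T with
    | zero => simp
    | succ T ih =>
      rw [Finset.prod_range_succ, ih, hstep T]
      ring
  have hanti : Antitone (fun T => q T * P T) := by
    apply antitone_nat_of_succ_le
    intro t
    have := hstep t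
    nlinarith [ha (t + 1), hd0 t]
  have hsumle : ∀ T, 1 + ∑ t ∈ Finset.range T, d t ≤ ∏ t ∈ Finset.range T, (1 + d t) := by
    intro T
    induction T with
    | zero => simp
    | succ T ih =>
      rw [Finset.prod_range_succ, Finset.sum_range_succ]
      have h1 : (0:ℝ) ≤ ∑ t ∈ Finset.range T, d t :=
        Finset.sum_nonneg fun t _ => hd0 t
      nlinarith [hd0 T, hprodpos T]
  constructor
  · rintro ⟨L, hL, hLpos⟩
    have hLle : ∀ T, L ≤ q T * P T := fun T => hanti.le_of_tendsto hL T
    apply summable_of_sum_range_le hd0 (c := q 0 * P 0 / L - 1)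
    intro T
    have h1 : ∏ t ∈ Finset.range T, (1 + d t) ≤ q 0 * P 0 / L := by
      rw [le_div_iff₀ hLpos]
      calc (∏ t ∈ Finset.range T, (1 + d t)) * L
          ≤ (∏ t ∈ Finset.range T, (1 + d t)) * (q T * P T) := by
            exact mul_le_mul_of_nonneg_left (hLle T) (hprodpos T).le
        _ = q 0 * P 0 := by rw [mul_comm]; exact (hkey T).symm
    linarith [hsumle T]
  · intro hsum
    set S : ℝ := ∑' t, d t with hS
    have hpartial : ∀ T, ∑ t ∈ Finset.range T, d t ≤ S :=
      fun T => Summable.sum_le_tsum _ (fun t _ => hd0 t) hsum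
    have hprodle : ∀ T, ∏ t ∈ Finset.range T, (1 + d t) ≤ Real.exp S := by
      intro T
      calc ∏ t ∈ Finset.range T, (1 + d t)
          ≤ ∏ t ∈ Finset.range T, Real.exp (d t) := by
            apply Finset.prod_le_prod (fun t _ => by linarith [hd0 t])
            intro t _
            linarith [Real.add_one_le_exp (d t)]
        _ = Real.exp (∑ t ∈ Finset.range T, d t) := (Real.exp_sum _ _).symm
        _ ≤ Real.exp S := Real.exp_le_exp.mpr (hpartial T)
    have hc : ∀ T, q 0 * P 0 / Real.exp S ≤ q T * P T := by
      intro T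
      rw [div_le_iff₀ (Real.exp_pos S)]
      calc q 0 * P 0 = (q T * P T) * ∏ t ∈ Finset.range T, (1 + d t) := hkey T
        _ ≤ (q T * P T) * Real.exp S :=
            mul_le_mul_of_nonneg_left (hprodle T) (ha T).le
    have hbdd : BddBelow (Set.range fun T => q T * P T) := by
      refine ⟨q 0 * P 0 / Real.exp S, ?_⟩
      rintro x ⟨T, rfl⟩
      exact hc T
    refine ⟨⨅ T, q T * P T, tendsto_atTop_ciInf hanti hbdd, ?_⟩
    have : q 0 * P 0 / Real.exp S ≤ ⨅ T, q T * P T := le_ciInf hc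
    have hpos : 0 < q 0 * P 0 / Real.exp S := div_pos (ha 0) (Real.exp_pos S)
    linarith
end

section
/- Let $F(K,L) = (\alpha K^{1-1/\sigma} + (1-\alpha)L^{1-1/\sigma})^{1/(1-1/\sigma)}$ be the CES production function with $\sigma > 0$, $\sigma \neq 1$, $\alpha\in(0,1)$, and let $K_t = K_0 G_K^t$, $L_t = L_0 G_L^t$ with $G_K, G_L > 0$. Then the dividend yield $\frac{D_t}{P_t} = \frac{1}{\beta}\frac{F_K(K_t,L_t)K_t}{F_L(K_t,L_t)L_t} = \frac{\alpha}{\beta(1-\alpha)}\left((G_K/G_L)^t (K_0/L_0)\right)^{1-1/\sigma}$, and $\sum_{t=0}^\infty D_t/P_t < \infty$ if and only if $(\sigma-1)(G_K - G_L) < 0$ (where the comparison $G_K > G_L$ etc. is in the multiplicative sense). -/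
open Real

lemma ces_deriv (p a c x : ℝ) (hp : p ≠ 0) (ha : 0 < a) (hc : 0 < c) (hx : 0 < x) :
    deriv (fun k => (a * k ^ p + c) ^ (1/p)) x
      = a * x ^ (p - 1) * (a * x ^ p + c) ^ (1/p - 1) := by
  have hS : 0 < a * x ^ p + c := by positivity
  have h1 : HasDerivAt (fun k : ℝ => k ^ p) (p * x ^ (p - 1)) x :=
    Real.hasDerivAt_rpow_const (Or.inl hx.ne')
  have h2 : HasDerivAt (fun k : ℝ => a * k ^ p + c) (a * (p * x ^ (p - 1))) x :=
    (h1.const_mul a).add_const c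
  have h3 : HasDerivAt (fun s : ℝ => s ^ (1/p)) (1/p * (a * x ^ p + c) ^ (1/p - 1))
      (a * x ^ p + c) := Real.hasDerivAt_rpow_const (Or.inl hS.ne')
  have h4 : HasDerivAt (fun k => (a * k ^ p + c) ^ (1/p))
      (1/p * (a * x ^ p + c) ^ (1/p - 1) * (a * (p * x ^ (p - 1)))) x := by
    have h := h3.comp x h2; exact h
  rw [h4.deriv]
  field_simp

/-- CES production: the dividend yield equals the stated closed form and it is
summable iff `(σ - 1)(G_K - G_L) < 0`. Here `P t = β F_L L` and `D t = F_K K`. -/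
theorem stmt_5 (σ α β K₀ L₀ Gk Gl : ℝ)
    (hσ : 0 < σ) (hσ1 : σ ≠ 1) (hα : α ∈ Set.Ioo (0 : ℝ) 1)
    (hβ : β ∈ Set.Ioo (0 : ℝ) 1)
    (hK₀ : 0 < K₀) (hL₀ : 0 < L₀) (hGk : 0 < Gk) (hGl : 0 < Gl)
    (F : ℝ → ℝ → ℝ)
    (hF : ∀ K L, F K L =
      (α * K ^ (1 - 1 / σ) + (1 - α) * L ^ (1 - 1 / σ)) ^ (1 / (1 - 1 / σ)))
    (K L D P : ℕ → ℝ)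
    (hK : ∀ t, K t = K₀ * Gk ^ t) (hL : ∀ t, L t = L₀ * Gl ^ t)
    (hD : ∀ t, D t = deriv (fun k => F k (L t)) (K t) * K t)
    (hP : ∀ t, P t = β * (deriv (fun l => F (K t) l) (L t) * L t)) :
    (∀ t, D t / P t =
      α / (β * (1 - α)) * ((Gk / Gl) ^ t * (K₀ / L₀)) ^ (1 - 1 / σ)) ∧
    (Summable (fun t => D t / P t) ↔ (σ - 1) * (Gk - Gl) < 0) := by
  obtain ⟨hα0, hα1⟩ := hα
  obtain ⟨hβ0, hβ1⟩ := hβ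
  set p : ℝ := 1 - 1/σ with hpdef
  have hp : p ≠ 0 := by
    simp only [hpdef]
    intro h
    have h1 : (1:ℝ)/σ = 1 := by linarith
    have : σ = 1 := by field_simp at h1; linarith
    exact hσ1 this
  have hα1' : 0 < 1 - α := by linarith
  have hKpos : ∀ t, 0 < K t := fun t => by rw [hK]; positivity
  have hLpos : ∀ t, 0 < L t := fun t => by rw [hL]; positivity
  -- closed form
  have hmain : ∀ t, D t / P t =
      α / (β * (1 - α)) * ((Gk / Gl) ^ t * (K₀ / L₀)) ^ p := by
    intro t
    have hSpos : 0 < α * K t ^ p + (1 - α) * L t ^ p := by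
      have := hKpos t; have := hLpos t; positivity
    have hdD : deriv (fun k => F k (L t)) (K t)
        = α * K t ^ (p - 1) * (α * K t ^ p + (1 - α) * L t ^ p) ^ (1/p - 1) := by
      have h : (fun k => F k (L t)) =
          fun k => (α * k ^ p + (1 - α) * L t ^ p) ^ (1/p) := by
        funext k; rw [hF]
      rw [h, ces_deriv p α ((1 - α) * L t ^ p) (K t) hp hα0
        (by have := hLpos t; positivity) (hKpos t)]
    have hdP : deriv (fun l => F (K t) l) (L t)
        = (1 - α) * L t ^ (p - 1) * ((1 - α) * L t ^ p + α * K t ^ p) ^ (1/p - 1) := by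
      have h : (fun l => F (K t) l) =
          fun l => ((1 - α) * l ^ p + α * K t ^ p) ^ (1/p) := by
        funext l; rw [hF]; ring_nf
      rw [h, ces_deriv p (1 - α) (α * K t ^ p) (L t) hp hα1'
        (by have := hKpos t; positivity) (hLpos t)]
    have hSne : (0:ℝ) < (α * K t ^ p + (1 - α) * L t ^ p) ^ (1/p - 1) := by positivity
    have hKL : K t ^ p = ((Gk / Gl) ^ t * (K₀ / L₀)) ^ p * L t ^ p := by
      rw [← Real.mul_rpow (by positivity) (le_of_lt (hLpos t)), hK, hL]
      congr 1
      field_simp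
      ring
      rw [inv_pow, mul_assoc, mul_inv_cancel₀ (pow_ne_zero t hGl.ne'), mul_one]
    have hsub : ∀ x : ℝ, 0 < x → x ^ (p - 1) = x ^ p / x := by
      intro x hx
      rw [Real.rpow_sub hx, Real.rpow_one]
    set Se := (α * K t ^ p + (1 - α) * L t ^ p) ^ (1/p - 1) with hSe
    set C := ((Gk / Gl) ^ t * (K₀ / L₀)) ^ p with hCdef
    have cancel : ∀ a y s x : ℝ, x ≠ 0 → a * (y / x) * s * x = a * (y * s) := by
      intro a y s x hx
      field_simp
    have hDe : D t = α * C * (L t ^ p * Se) := by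
      rw [hD, hdD, hsub _ (hKpos t), cancel _ _ _ _ (hKpos t).ne', hKL]
      ring
    have hPe : P t = β * (1 - α) * (L t ^ p * Se) := by
      rw [hP, hdP, add_comm ((1 - α) * L t ^ p) (α * K t ^ p), hsub _ (hLpos t),
        cancel _ _ _ _ (hLpos t).ne']
      ring
    have hLp : (0:ℝ) < L t ^ p := Real.rpow_pos_of_pos (hLpos t) p
    have hX : L t ^ p * Se ≠ 0 := by positivity
    rw [hDe, hPe, mul_div_mul_right _ _ hX]
    ring
  refine ⟨hmain, ?_⟩
  -- summability
  have hC : α / (β * (1 - α)) * (K₀ / L₀) ^ p ≠ 0 := by positivity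
  have hQ : (0:ℝ) < Gk / Gl := by positivity
  have hfe : (fun t => D t / P t)
      = fun t : ℕ => α / (β * (1 - α)) * (K₀ / L₀) ^ p * ((Gk / Gl) ^ p) ^ t := by
    funext t
    rw [hmain t]
    rw [Real.mul_rpow (by positivity) (by positivity)]
    rw [← Real.rpow_natCast (Gk/Gl) t, ← Real.rpow_natCast ((Gk/Gl)^p) t,
      ← Real.rpow_mul hQ.le, ← Real.rpow_mul hQ.le, mul_comm p (t:ℝ)]
    ring
  rw [hfe]
  rw [summable_mul_left_iff hC, summable_geometric_iff_norm_lt_one,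
    Real.norm_eq_abs, abs_of_pos (Real.rpow_pos_of_pos hQ p)]
  rw [Real.rpow_def_of_pos hQ, Real.exp_lt_one_iff]
  have hps : 0 < p ↔ 0 < σ - 1 := by
    rw [hpdef, sub_pos, div_lt_one hσ, sub_pos]
  have hpn : p < 0 ↔ σ - 1 < 0 := by
    rw [hpdef, sub_neg, sub_neg, lt_div_iff₀ hσ, one_mul]
  have hlp : 0 < Real.log (Gk/Gl) ↔ 0 < Gk - Gl := by
    rw [Real.log_pos_iff hQ.le, sub_pos, one_lt_div hGl]
  have hln : Real.log (Gk/Gl) < 0 ↔ Gk - Gl < 0 := by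
    rw [Real.log_neg_iff hQ, sub_neg, div_lt_one hGl]
  rw [mul_neg_iff, mul_neg_iff]
  tauto
end

section
/- In Wilson's linear-utility OLG example with $U_t(y,z) = y + \beta z$, endowments $(a_t, b_t) = (aG^t, bG^t)$ and dividends $D_t = D G_d^t$ where $a, b, D > 0$ and $1/\beta < G_d < G$, the unique equilibrium asset price is $P_t = a G^t$ for all $t$, and the asset price exhibits a bubble. -/
/-- Wilson's linear-utility OLG example: with `U(y,z) = y + β z`, endowments
`(a G^t, b G^t)`, dividends `D Gd^t`, and `1/β < Gd < G`, the unique equilibrium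
asset price is `P t = a G^t`, and the asset price exhibits a bubble. -/
theorem stmt_8 (a b D β G Gd : ℝ)
    (ha : 0 < a) (hb : 0 < b) (hD : 0 < D) (hβ : 0 < β)
    (h1 : 1 / β < Gd) (h2 : Gd < G)
    (P : ℕ → ℝ) (hPpos : ∀ t, 0 < P t)
    -- nonnegative consumption of the young
    (hfeas : ∀ t, P t ≤ a * G ^ t)
    -- optimality: gross interest rate at least 1/β …
    (hR : ∀ t, 1 / β ≤ (P (t + 1) + D * Gd ^ (t + 1)) / P t)
    -- … with equality whenever the young's consumption is interior
    (hRint : ∀ t, P t < a * G ^ t →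
      (P (t + 1) + D * Gd ^ (t + 1)) / P t = 1 / β) :
    (∀ t, P t = a * G ^ t) ∧ Summable (fun t => D * Gd ^ t / P t) := by
  have hGd : 0 < Gd := lt_trans (by positivity) h1
  have hG : 0 < G := lt_trans hGd h2
  have hβGd : 1 < β * Gd := by
    have := (div_lt_iff₀ hβ).mp h1
    nlinarith
  have hβG : 1 < β * G := by nlinarith
  -- recurrence when interior
  have hrec : ∀ s, P s < a * G ^ s → β * P (s + 1) = P s - β * (D * Gd ^ (s + 1)) := by
    intro s hs
    have h := hRint s hs
    rw [div_eq_div_iff (hPpos s).ne' hβ.ne'] at h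
    nlinarith
  have key : ∀ t, P t = a * G ^ t := by
    intro t
    by_contra hne
    have ht : P t < a * G ^ t := lt_of_le_of_ne (hfeas t) hne
    have main : ∀ n : ℕ, P (t + n) < a * G ^ (t + n) ∧
        β ^ n * P (t + n) + n * (D * Gd ^ t) ≤ P t := by
      intro n
      induction n with
      | zero => simpa using ht
      | succ n ih =>
        obtain ⟨hint, hbound⟩ := ih
        have heq := hrec (t + n) hint
        have hβn : (0:ℝ) < β ^ n := pow_pos hβ n
        have hDG : (0:ℝ) < D * Gd ^ (t + n + 1) := by positivity
        have haG : (0:ℝ) < a * G ^ (t + n) := by positivity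
        constructor
        · -- interiority propagates
          have h3 : β * P (t + n + 1) < P (t + n) := by nlinarith
          have h4 : a * G ^ (t + n) < β * (a * G ^ (t + n + 1)) := by
            have : a * G ^ (t + n + 1) = a * G ^ (t + n) * G := by rw [pow_succ]; ring
            rw [this]; nlinarith
          have : β * P (t + n + 1) < β * (a * G ^ (t + n + 1)) := by
            calc β * P (t + n + 1) < P (t + n) := h3
              _ ≤ a * G ^ (t + n) := le_of_lt hint
              _ < β * (a * G ^ (t + n + 1)) := h4
          exact (mul_lt_mul_iff_right₀ hβ).mp this
        · have e1 : β ^ (n + 1) * P (t + (n + 1)) =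
              β ^ n * P (t + n) - β ^ (n + 1) * (D * Gd ^ (t + n + 1)) := by
            have h5 : P (t + (n + 1)) = P (t + n + 1) := by ring_nf
            rw [h5, pow_succ]
            nlinarith [heq]
          have hpow : (1:ℝ) ≤ (β * Gd) ^ (n + 1) := one_le_pow₀ hβGd.le
          have hdd : D * Gd ^ t ≤ β ^ (n + 1) * (D * Gd ^ (t + n + 1)) := by
            have h6 : β ^ (n + 1) * (D * Gd ^ (t + n + 1)) =
                D * Gd ^ t * (β * Gd) ^ (n + 1) := by
              rw [show t + n + 1 = t + (n + 1) by omega, pow_add, mul_pow]; ring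
            rw [h6]
            exact le_mul_of_one_le_right (by positivity) hpow
          push_cast
          linarith
    obtain ⟨n, hn⟩ := exists_nat_gt (P t / (D * Gd ^ t))
    have hDGt : (0:ℝ) < D * Gd ^ t := by positivity
    have h7 : P t < n * (D * Gd ^ t) := by
      rw [div_lt_iff₀ hDGt] at hn; linarith
    obtain ⟨_, hbound⟩ := main n
    have := mul_pos (pow_pos hβ n) (hPpos (t + n))
    linarith
  refine ⟨key, ?_⟩
  have hfun : (fun t => D * Gd ^ t / P t) = fun t => (D / a) * (Gd / G) ^ t := by
    funext t
    rw [key t, div_pow]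
    field_simp
  rw [hfun]
  exact (summable_geometric_of_lt_one (by positivity)
    ((div_lt_one hG).2 h2)).mul_left _
end
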